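/- arXiv:2201.10053 — 2 statements merged into one kernel-verified Lean document; each statement's English description precedes it below -/
import Mathlib

section
/- Refinement increases optimal value: let P and P' be partitioning functions on 𝓧 such that P' refines P (every queue of P' is contained in a queue of P), and suppose the corresponding arrival rates are λ'_{q'} = λ_𝓠 ℙ(P'(X) = q') and CATEs τ'_{q'r} = E[Y(r) − Y(1) | P'(X) = q']. Then any flow F feasible for the flow-balance constraints (Σ_{q} f_{qr} = μ_r, Σ_r f_{qr} = λ_q, f ≥ 0) under partition P induces a feasible flow F' under P' (by splitting each queue's flow proportionally to arrival rates) achieving the same objective value Σ τ f; hence the optimal value of the flow LP under the finer partition P' is at least that under P. -/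
open MeasureTheory Finset

/-- **Refinement increases the optimal value.** Let `P'` refine `P` (witnessed by `c` with
`P = c ∘ P'` on features, here precomposed with the feature map `X`). With arrival rates
`λ_q = λ_𝓠 ℙ(P(X) = q)`, `λ'_{q'} = λ_𝓠 ℙ(P'(X) = q')` and CATEs
`τ_{qr} = E[Y(r) - Y(1) | P(X) = q]`, `τ'_{q'r} = E[Y(r) - Y(1) | P'(X) = q']`, every flow `F`
feasible for the flow-balance constraints under `P` induces (by proportional splitting) a
feasible flow `F'` under `P'` with the same objective value `Σ τ f`; hence the set of
achievable objective values under `P` is contained in that under `P'`, so the optimal value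
of the flow LP under the finer partition is at least that under the coarser one. -/
theorem refinement_increases_value
    {Ω 𝓠 𝓠' 𝓡 : Type*} [Fintype 𝓠] [Fintype 𝓠'] [Fintype 𝓡]
    [Nonempty 𝓠] [Nonempty 𝓠'] [Nonempty 𝓡]
    [MeasurableSpace Ω]
    (μ : Measure Ω) [IsProbabilityMeasure μ]
    (PX : Ω → 𝓠) (P'X : Ω → 𝓠')
    (hPX : ∀ q : 𝓠, MeasurableSet {ω | PX ω = q})
    (hP'X : ∀ q' : 𝓠', MeasurableSet {ω | P'X ω = q'})
    (c : 𝓠' → 𝓠) (hrefine : ∀ ω, PX ω = c (P'X ω))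
    (Y : 𝓡 → Ω → ℝ) (hY : ∀ r, Integrable (Y r) μ)
    (r₁ : 𝓡)  -- baseline treatment
    (lamQ : ℝ) (hlamQ : 0 < lamQ)
    (lam : 𝓠 → ℝ) (hlam : ∀ q, lam q = lamQ * (μ {ω | PX ω = q}).toReal)
    (lam' : 𝓠' → ℝ) (hlam' : ∀ q', lam' q' = lamQ * (μ {ω | P'X ω = q'}).toReal)
    (hlampos : ∀ q, 0 < lam q) (hlam'pos : ∀ q', 0 < lam' q')
    (mu : 𝓡 → ℝ)
    (τ : 𝓠 → 𝓡 → ℝ)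
    (hτ : ∀ q r, τ q r
      = (∫ ω in {ω | PX ω = q}, (Y r ω - Y r₁ ω) ∂μ) / (μ {ω | PX ω = q}).toReal)
    (τ' : 𝓠' → 𝓡 → ℝ)
    (hτ' : ∀ q' r, τ' q' r
      = (∫ ω in {ω | P'X ω = q'}, (Y r ω - Y r₁ ω) ∂μ) / (μ {ω | P'X ω = q'}).toReal) :
    (∀ f : 𝓠 → 𝓡 → ℝ,
      (∀ q r, 0 ≤ f q r) → (∀ r, ∑ q, f q r = mu r) → (∀ q, ∑ r, f q r = lam q) →
      ∃ f' : 𝓠' → 𝓡 → ℝ,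
        (∀ q' r, 0 ≤ f' q' r) ∧ (∀ r, ∑ q', f' q' r = mu r) ∧
        (∀ q', ∑ r, f' q' r = lam' q') ∧
        (∑ q', ∑ r, f' q' r * τ' q' r = ∑ q, ∑ r, f q r * τ q r))
    ∧
    {v : ℝ | ∃ f : 𝓠 → 𝓡 → ℝ,
        (∀ q r, 0 ≤ f q r) ∧ (∀ r, ∑ q, f q r = mu r) ∧ (∀ q, ∑ r, f q r = lam q) ∧
        v = ∑ q, ∑ r, f q r * τ q r}
      ⊆ {v : ℝ | ∃ f' : 𝓠' → 𝓡 → ℝ,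
        (∀ q' r, 0 ≤ f' q' r) ∧ (∀ r, ∑ q', f' q' r = mu r) ∧ (∀ q', ∑ r, f' q' r = lam' q') ∧
        v = ∑ q', ∑ r, f' q' r * τ' q' r} := by
 classical
  have hset : ∀ q : 𝓠, {ω | PX ω = q}
      = ⋃ q' ∈ Finset.univ.filter (fun q' => c q' = q), {ω | P'X ω = q'} := by
    intro q
    ext ω
    simp only [Set.mem_setOf_eq, Set.mem_iUnion, Finset.mem_filter, Finset.mem_univ, true_and,
      exists_prop, hrefine ω]
    constructor
    · intro h; exact ⟨P'X ω, h, rfl⟩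
    · rintro ⟨q', hq', rfl⟩; exact hq'
  have hdisj : ∀ q : 𝓠,
      ((Finset.univ.filter (fun q' => c q' = q) : Finset 𝓠') : Set 𝓠').PairwiseDisjoint
        (fun q' => {ω | P'X ω = q'}) := by
    intro q a _ b _ hab
    simp only [Function.onFun, Set.disjoint_left, Set.mem_setOf_eq]
    intro ω ha hb
    exact hab (ha ▸ hb ▸ rfl)
  have hmeasfin : ∀ q' : 𝓠', μ {ω | P'X ω = q'} ≠ ⊤ := fun q' =>
    (measure_lt_top μ _).ne
  have hmeassum : ∀ q : 𝓠,
      (μ {ω | PX ω = q}).toReal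
        = ∑ q' ∈ Finset.univ.filter (fun q' => c q' = q), (μ {ω | P'X ω = q'}).toReal := by
    intro q
    rw [hset q, measure_biUnion_finset (hdisj q) (fun q' _ => hP'X q'), ENNReal.toReal_sum]
    intro q' _
    exact hmeasfin q'
  have hlamsum : ∀ q : 𝓠,
      ∑ q' ∈ Finset.univ.filter (fun q' => c q' = q), lam' q' = lam q := by
    intro q
    rw [hlam q, hmeassum q, Finset.mul_sum]
    exact Finset.sum_congr rfl fun q' _ => hlam' q'
  have hintsum : ∀ (r : 𝓡) (q : 𝓠),
      ∫ ω in {ω | PX ω = q}, (Y r ω - Y r₁ ω) ∂μ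
        = ∑ q' ∈ Finset.univ.filter (fun q' => c q' = q),
            ∫ ω in {ω | P'X ω = q'}, (Y r ω - Y r₁ ω) ∂μ := by
    intro r q
    rw [hset q]
    exact integral_biUnion_finset _ (fun q' _ => hP'X q') (hdisj q)
      (fun q' _ => ((hY r).sub (hY r₁)).integrableOn
      )
  have htpos : ∀ q' : 𝓠', 0 < (μ {ω | P'X ω = q'}).toReal := by
    intro q'
    have := hlam'pos q'
    rw [hlam' q'] at this
    nlinarith [(μ {ω | P'X ω = q'}).toReal_nonneg]
  have htpos' : ∀ q : 𝓠, 0 < (μ {ω | PX ω = q}).toReal := by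
    intro q
    have := hlampos q
    rw [hlam q] at this
    nlinarith [(μ {ω | PX ω = q}).toReal_nonneg]
  have hkey : ∀ (r : 𝓡) (q : 𝓠),
      ∑ q' ∈ Finset.univ.filter (fun q' => c q' = q), lam' q' * τ' q' r = lam q * τ q r := by
    intro r q
    have h1 : ∀ q' : 𝓠', lam' q' * τ' q' r
        = lamQ * ∫ ω in {ω | P'X ω = q'}, (Y r ω - Y r₁ ω) ∂μ := by
      intro q'
      have ht : ((μ {ω | P'X ω = q'}).toReal) ≠ 0 := (htpos q').ne'
      rw [hlam' q', hτ' q' r]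
      field_simp
    have h2 : lam q * τ q r = lamQ * ∫ ω in {ω | PX ω = q}, (Y r ω - Y r₁ ω) ∂μ := by
      have ht : ((μ {ω | PX ω = q}).toReal) ≠ 0 := (htpos' q).ne'
      rw [hlam q, hτ q r]
      field_simp
    simp only [h1, h2, ← Finset.mul_sum, hintsum r q]
  have main : ∀ f : 𝓠 → 𝓡 → ℝ,
      (∀ q r, 0 ≤ f q r) → (∀ r, ∑ q, f q r = mu r) → (∀ q, ∑ r, f q r = lam q) →
      ∃ f' : 𝓠' → 𝓡 → ℝ,
        (∀ q' r, 0 ≤ f' q' r) ∧ (∀ r, ∑ q', f' q' r = mu r) ∧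
        (∀ q', ∑ r, f' q' r = lam' q') ∧
        (∑ q', ∑ r, f' q' r * τ' q' r = ∑ q, ∑ r, f q r * τ q r) := by
    intro f hpos hcol hrow
    refine ⟨fun q' r => f (c q') r * (lam' q' / lam (c q')), ?_, ?_, ?_, ?_⟩
    · intro q' r
      have := hpos (c q') r
      have h1 := (hlam'pos q').le
      have h2 := hlampos (c q')
      positivity
    · intro r
      rw [← hcol r]
      rw [← Finset.sum_fiberwise (Finset.univ : Finset 𝓠')
        (fun q' => c q') (fun q' => f (c q') r * (lam' q' / lam (c q')))]
      refine Finset.sum_congr rfl fun q _ => ?_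
      have : ∑ q' ∈ Finset.univ.filter (fun q' => c q' = q),
          f (c q') r * (lam' q' / lam (c q'))
          = ∑ q' ∈ Finset.univ.filter (fun q' => c q' = q),
            f q r / lam q * lam' q' := by
        refine Finset.sum_congr rfl fun q' hq' => ?_
        rw [Finset.mem_filter] at hq'
        rw [hq'.2]; ring
      rw [this, ← Finset.mul_sum, hlamsum q, div_mul_cancel₀ _ (hlampos q).ne']
    · intro q'
      rw [← Finset.sum_mul, hrow (c q')]
      field_simp [(hlampos (c q')).ne']
    · rw [Finset.sum_comm]
      conv_rhs => rw [Finset.sum_comm]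
      refine Finset.sum_congr rfl fun r _ => ?_
      rw [← Finset.sum_fiberwise (Finset.univ : Finset 𝓠')
        (fun q' => c q') (fun q' => f (c q') r * (lam' q' / lam (c q')) * τ' q' r)]
      refine Finset.sum_congr rfl fun q _ => ?_
      have : ∑ q' ∈ Finset.univ.filter (fun q' => c q' = q),
          f (c q') r * (lam' q' / lam (c q')) * τ' q' r
          = f q r / lam q * ∑ q' ∈ Finset.univ.filter (fun q' => c q' = q),
            lam' q' * τ' q' r := by
        rw [Finset.mul_sum]
        refine Finset.sum_congr rfl fun q' hq' => ?_
        rw [Finset.mem_filter] at hq'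
        rw [hq'.2]; ring
      rw [this, hkey r q]
      field_simp [(hlampos q).ne']
  refine ⟨main, ?_⟩
  rintro v ⟨f, hpos, hcol, hrow, rfl⟩
  obtain ⟨f', h1, h2, h3, h4⟩ := main f hpos hcol hrow
  exact ⟨f', h1, h2, h3, h4.symm⟩
end

section
/- Conditional independence from X implies conditional mean identification under S: with binary potential outcomes Y(r) ∈ {0,1}, score S_r = E[Y(r) | X], and conditional exchangeability Y ⟂ R | X, it holds that E[Y(r) | S, R] = S_r = E[Y(r) | S] almost surely, where S = (S_1, …, S_{|𝓡|}). -/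
open MeasureTheory ProbabilityTheory

/-- Auxiliary lemma: the core computation with an abstract sub-σ-algebra `m` in place of
`σ(X)`. -/
lemma risk_score_conditional_means_aux
    {Ω 𝓡 : Type*} (m : MeasurableSpace Ω) [mΩ : MeasurableSpace Ω] [StandardBorelSpace Ω]
    [Fintype 𝓡] [MeasurableSpace 𝓡] [MeasurableSingletonClass 𝓡]
    (μ : Measure Ω) [IsProbabilityMeasure μ]
    (hm : m ≤ mΩ)
    (R : Ω → 𝓡) (hR : Measurable R)
    (Y : Ω → (𝓡 → ℝ)) (hYmeas : Measurable Y)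
    (hYbin : ∀ ω r, Y ω r = 0 ∨ Y ω r = 1)
    (S : Ω → (𝓡 → ℝ)) (hSmeas : Measurable S) (hS_m : Measurable[m] S)
    (hS : ∀ r : 𝓡, (fun ω => S ω r) =ᵐ[μ] μ[(fun ω => Y ω r) | m])
    (hexch : CondIndepFun m hm Y R μ)
    (r : 𝓡) :
    (μ[(fun ω => Y ω r) | MeasurableSpace.comap (fun ω => (S ω, R ω)) inferInstance]
        =ᵐ[μ] (fun ω => S ω r))
    ∧ (μ[(fun ω => Y ω r) | MeasurableSpace.comap S inferInstance]
        =ᵐ[μ] (fun ω => S ω r)) := by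
  classical
  set f : Ω → ℝ := fun ω => Y ω r with hf_def
  set g : Ω → ℝ := fun ω => S ω r with hg_def
  have hf_meas : Measurable f := (measurable_pi_apply r).comp hYmeas
  have hg_meas : Measurable g := (measurable_pi_apply r).comp hSmeas
  -- `f` is the indicator of `B1`
  set B1 : Set Ω := (fun ω => Y ω r) ⁻¹' {1} with hB1_def
  have hB1 : MeasurableSet B1 := hf_meas (measurableSet_singleton 1)
  have hf_eq : f = Set.indicator B1 (fun _ => (1 : ℝ)) := by
    funext ω
    rcases hYbin ω r with h | h
    · have hω : ω ∉ B1 := by simp [hB1_def, h]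
      simp [hf_def, h, Set.indicator_of_notMem hω]
    · have hω : ω ∈ B1 := by simp [hB1_def, h]
      simp [hf_def, h, Set.indicator_of_mem hω]
  have hf_int : Integrable f μ := by
    rw [hf_eq]; exact (integrable_const (1 : ℝ)).indicator hB1
  have hg_ae : g =ᵐ[μ] μ[f | m] := hS r
  have hg_int : Integrable g μ := integrable_condExp.congr hg_ae.symm
  have hg_m : Measurable[m] g := (measurable_pi_apply r).comp hS_m
  have hB1_cond : (μ⟦B1 | m⟧) =ᵐ[μ] g := by
    have h1 : (μ⟦B1 | m⟧) = μ[f | m] := by rw [hf_eq]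
    rw [h1]; exact hg_ae.symm
  -- key set-integral identity on π-system pieces
  have key : ∀ D : Set Ω, MeasurableSet[m] D → ∀ t : 𝓡,
      ∫ ω in D ∩ R ⁻¹' {t}, g ω ∂μ = ∫ ω in D ∩ R ⁻¹' {t}, f ω ∂μ := by
    intro D hD t
    set B2 : Set Ω := R ⁻¹' {t} with hB2_def
    have hB2 : MeasurableSet B2 := hR (measurableSet_singleton t)
    have hind_f : Set.indicator B2 f = Set.indicator (B1 ∩ B2) (fun _ => (1 : ℝ)) := by
      funext ω
      by_cases hω : ω ∈ B2
      · rcases hYbin ω r with h | h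
        · have hω1 : ω ∉ B1 ∩ B2 := by simp [hB1_def, h]
          simp [Set.indicator_of_mem hω, Set.indicator_of_notMem hω1, hf_def, h]
        · have hω1 : ω ∈ B1 ∩ B2 := ⟨by simp [hB1_def, h], hω⟩
          simp [Set.indicator_of_mem hω, Set.indicator_of_mem hω1, hf_def, h]
      · have hω1 : ω ∉ B1 ∩ B2 := fun h => hω h.2
        simp [Set.indicator_of_notMem hω, Set.indicator_of_notMem hω1]
    have hind_g : Set.indicator B2 g = g * Set.indicator B2 (fun _ => (1 : ℝ)) := by
      funext ω
      by_cases hω : ω ∈ B2 <;> simp [Set.indicator_apply, hω]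
    have hint_if : Integrable (Set.indicator B2 f) μ := hf_int.indicator hB2
    have hint_ig : Integrable (Set.indicator B2 g) μ := hg_int.indicator hB2
    have hint_i1 : Integrable (Set.indicator B2 (fun _ => (1 : ℝ))) μ :=
      (integrable_const (1 : ℝ)).indicator hB2
    -- conditional independence gives the product formula
    have hmul : (μ⟦B1 ∩ B2 | m⟧) =ᵐ[μ]
        fun ω => (μ⟦B1 | m⟧) ω * (μ⟦B2 | m⟧) ω :=
      (condIndepFun_iff_condExp_inter_preimage_eq_mul (hm' := hm) hYmeas hR).mp hexch
        ((fun v : 𝓡 → ℝ => v r) ⁻¹' {1}) {t}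
        ((measurable_pi_apply r) (measurableSet_singleton 1))
        (measurableSet_singleton t)
    -- pull-out property
    have hpull : μ[Set.indicator B2 g | m] =ᵐ[μ] fun ω => g ω * (μ⟦B2 | m⟧) ω := by
      have h2 := condExp_mul_of_stronglyMeasurable_left (μ := μ) (m := m)
        hg_m.stronglyMeasurable (by rwa [← hind_g]) hint_i1
      calc μ[Set.indicator B2 g | m]
          = μ[g * Set.indicator B2 (fun _ => (1 : ℝ)) | m] := by rw [hind_g]
        _ =ᵐ[μ] g * μ[Set.indicator B2 (fun _ => (1 : ℝ)) | m] := h2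
        _ = fun ω => g ω * (μ⟦B2 | m⟧) ω := rfl
    have hDmeas : MeasurableSet D := hm D hD
    calc ∫ ω in D ∩ B2, g ω ∂μ
        = ∫ ω in D, Set.indicator B2 g ω ∂μ := (setIntegral_indicator hB2).symm
      _ = ∫ ω in D, (μ[Set.indicator B2 g | m]) ω ∂μ :=
          (setIntegral_condExp hm hint_ig hD).symm
      _ = ∫ ω in D, (μ[Set.indicator B2 f | m]) ω ∂μ := by
          refine setIntegral_congr_ae hDmeas ?_
          have h1 : μ[Set.indicator B2 f | m] = μ⟦B1 ∩ B2 | m⟧ := by rw [hind_f]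
          filter_upwards [hpull, hmul, hB1_cond] with ω h₁ h₂ h₃
          intro _
          rw [h₁, h1, h₂, h₃]
      _ = ∫ ω in D, Set.indicator B2 f ω ∂μ := setIntegral_condExp hm hint_if hD
      _ = ∫ ω in D ∩ B2, f ω ∂μ := setIntegral_indicator hB2
  have hmSR : MeasurableSpace.comap (fun ω => (S ω, R ω)) inferInstance ≤ mΩ :=
    (hSmeas.prodMk hR).comap_le
  have hmS_le_m : MeasurableSpace.comap S inferInstance ≤ m := hS_m.comap_le
  have hmS : MeasurableSpace.comap S inferInstance ≤ mΩ := hmS_le_m.trans hm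
  constructor
  · -- conditioning on (S, R)
    refine (ae_eq_condExp_of_forall_setIntegral_eq hmSR hf_int
      (fun A _ _ => hg_int.integrableOn) ?_ ?_).symm
    · intro A hA _
      obtain ⟨C, hC, rfl⟩ := hA
      have hA_eq : (fun ω => (S ω, R ω)) ⁻¹' C
          = ⋃ t : 𝓡, (S ⁻¹' {v | (v, t) ∈ C} ∩ R ⁻¹' {t}) := by
        ext ω
        simp only [Set.mem_preimage, Set.mem_iUnion, Set.mem_inter_iff, Set.mem_setOf_eq,
          Set.mem_singleton_iff]
        constructor
        · intro h; exact ⟨R ω, h, rfl⟩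
        · rintro ⟨t, h, rfl⟩; exact h
      have hDt_m : ∀ t : 𝓡, MeasurableSet[m] (S ⁻¹' {v | (v, t) ∈ C}) := fun t =>
        hS_m (measurable_prodMk_right hC)
      have hmeas_t : ∀ t : 𝓡, MeasurableSet (S ⁻¹' {v | (v, t) ∈ C} ∩ R ⁻¹' {t}) :=
        fun t => (hm _ (hDt_m t)).inter (hR (measurableSet_singleton t))
      have hdisj : Pairwise (Function.onFun Disjoint
          fun t : 𝓡 => S ⁻¹' {v | (v, t) ∈ C} ∩ R ⁻¹' {t}) := by
        intro t₁ t₂ ht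
        refine Set.disjoint_left.mpr ?_
        rintro ω ⟨_, h₁⟩ ⟨_, h₂⟩
        exact ht ((h₁ : R ω = t₁).symm.trans h₂)
      rw [hA_eq, integral_iUnion_fintype hmeas_t hdisj (fun t => hg_int.integrableOn),
        integral_iUnion_fintype hmeas_t hdisj (fun t => hf_int.integrableOn)]
      exact Finset.sum_congr rfl fun t _ => key _ (hDt_m t) t
    · refine StronglyMeasurable.aestronglyMeasurable ?_
      have hS_mSR : Measurable[MeasurableSpace.comap (fun ω => (S ω, R ω)) inferInstance] S :=
        measurable_fst.comp (Measurable.of_comap_le le_rfl)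
      exact ((measurable_pi_apply r).comp hS_mSR).stronglyMeasurable
  · -- conditioning on S, via the tower property
    have hg_mS : Measurable[MeasurableSpace.comap S inferInstance] g :=
      (measurable_pi_apply r).comp (Measurable.of_comap_le le_rfl)
    calc μ[f | MeasurableSpace.comap S inferInstance]
        =ᵐ[μ] μ[μ[f | m] | MeasurableSpace.comap S inferInstance] :=
          (condExp_condExp_of_le hmS_le_m hm).symm
      _ =ᵐ[μ] μ[g | MeasurableSpace.comap S inferInstance] := condExp_congr_ae hg_ae.symm
      _ = g := condExp_of_stronglyMeasurable hmS hg_mS.stronglyMeasurable hg_int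

/-- **Core computation of risk-score sufficiency.** With binary potential outcomes
`Y(r) ∈ {0,1}`, scores `S_r = E[Y(r) | X]` (so `S` is a measurable function of `X` that is a
version of the conditional mean), and conditional exchangeability `Y ⟂ R | X`, one has
`E[Y(r) | S, R] = S_r = E[Y(r) | S]` almost surely. -/
theorem risk_score_conditional_means
    {Ω 𝓧 𝓡 : Type*} [MeasurableSpace Ω] [StandardBorelSpace Ω] [Nonempty Ω]
    [MeasurableSpace 𝓧] [Fintype 𝓡] [MeasurableSpace 𝓡] [MeasurableSingletonClass 𝓡]
    (μ : Measure Ω) [IsProbabilityMeasure μ]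
    (X : Ω → 𝓧) (hX : Measurable X)
    (R : Ω → 𝓡) (hR : Measurable R)
    (Y : Ω → (𝓡 → ℝ)) (hYmeas : Measurable Y)
    (hYbin : ∀ ω r, Y ω r = 0 ∨ Y ω r = 1)
    (S : Ω → (𝓡 → ℝ)) (hSmeas : Measurable S)
    (s : 𝓧 → (𝓡 → ℝ)) (hs : Measurable s) (hSX : S = s ∘ X)
    (hS : ∀ r : 𝓡, (fun ω => S ω r)
      =ᵐ[μ] μ[(fun ω => Y ω r) | MeasurableSpace.comap X inferInstance])
    (hexch : CondIndepFun (MeasurableSpace.comap X inferInstance) hX.comap_le Y R μ)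
    (r : 𝓡) :
    (μ[(fun ω => Y ω r) | MeasurableSpace.comap (fun ω => (S ω, R ω)) inferInstance])
        =ᵐ[μ] (fun ω => S ω r)
    ∧ (μ[(fun ω => Y ω r) | MeasurableSpace.comap S inferInstance])
        =ᵐ[μ] (fun ω => S ω r) := by
  have hS_m : Measurable[MeasurableSpace.comap X inferInstance] S := by
    rw [hSX]
    exact hs.comp (Measurable.of_comap_le le_rfl)
  exact risk_score_conditional_means_aux (MeasurableSpace.comap X inferInstance) μ
    hX.comap_le R hR Y hYmeas hYbin S hSmeas hS_m hS hexch r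
end
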